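/- arXiv:1710.06587 — 4 statements merged into one kernel-verified Lean document; each statement's English description precedes it below -/
import Mathlib

section
/- Let I and J be finite nonempty index sets, let ω_j > 0 for each j ∈ J be user priorities, and let x_{ij} ∈ {0,1} be an association satisfying Σ_{i∈I} x_{ij} = 1 for every j ∈ J. Let r_{ij} > 0 be arbitrary positive per-resource rates, and let d_i ≥ 0 be given loads such that d_i > 0 whenever x_{ij} = 1 for some j. Define y*_{ij} = ω_j x_{ij} d_i / (Σ_{l∈J} ω_l x_{il}) whenever Σ_{l∈J} ω_l x_{il} > 0 and y*_{ij} = 0 otherwise. Then for every allocation y with 0 ≤ y_{ij} ≤ x_{ij}, Σ_{j∈J} y_{ij} = d_i for all i, and y_{ij} > 0 whenever x_{ij} = 1, one has Σ_{j∈J} ω_j · ln(Σ_{i∈I} y_{ij} r_{ij}) ≤ Σ_{j∈J} ω_j · ln(Σ_{i∈I} y*_{ij} r_{ij}). In other words, the resource allocation proportional to user priorities is optimal, independently of the rates r_{ij}. -/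
open Finset Real

/-- Theorem 1: with fixed association `x`, loads `d` and rates `r`, the resource
allocation proportional to user priorities maximizes the weighted log utility. -/
theorem optimal_resource_allocation_proportional
    {I J : Type*} [Fintype I] [Fintype J] [Nonempty I] [Nonempty J]
    (ω : J → ℝ) (hω : ∀ j, 0 < ω j)
    (x : I → J → ℝ) (hx01 : ∀ i j, x i j = 0 ∨ x i j = 1)
    (hxc : ∀ j, ∑ i, x i j = 1)
    (r : I → J → ℝ) (hr : ∀ i j, 0 < r i j)
    (d : I → ℝ) (hd : ∀ i, 0 ≤ d i)
    (hdpos : ∀ i, (∃ j, x i j = 1) → 0 < d i)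
    (ystar : I → J → ℝ)
    (hystar : ∀ i j, ystar i j =
      if 0 < ∑ l, ω l * x i l then ω j * x i j * d i / (∑ l, ω l * x i l) else 0)
    (y : I → J → ℝ) (hy0 : ∀ i j, 0 ≤ y i j) (hy1 : ∀ i j, y i j ≤ x i j)
    (hyd : ∀ i, ∑ j, y i j = d i)
    (hypos : ∀ i j, x i j = 1 → 0 < y i j) :
    ∑ j, ω j * Real.log (∑ i, y i j * r i j) ≤
      ∑ j, ω j * Real.log (∑ i, ystar i j * r i j) := by
  classical
  have hxnn : ∀ i j, 0 ≤ x i j := by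
    intro i j; rcases hx01 i j with h | h <;> simp [h]
  -- each user has a serving base
  have hex : ∀ j, ∃ i, x i j = 1 := by
    intro j
    by_contra h
    push_neg at h
    have h0 : ∀ i, x i j = 0 := fun i => (hx01 i j).resolve_right (h i)
    have := hxc j
    simp [h0] at this
  set f : J → I := fun j => (hex j).choose with hf
  have hfx : ∀ j, x (f j) j = 1 := fun j => (hex j).choose_spec
  -- uniqueness: other bases have x = 0
  have hxz : ∀ i j, i ≠ f j → x i j = 0 := by
    intro i j hij
    have hsum := hxc j
    rw [← Finset.add_sum_erase _ _ (Finset.mem_univ (f j)), hfx j] at hsum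
    have h0 : ∑ i' ∈ Finset.univ.erase (f j), x i' j = 0 := by linarith
    have := (Finset.sum_eq_zero_iff_of_nonneg (fun i' _ => hxnn i' j)).mp h0
    exact this i (Finset.mem_erase.mpr ⟨hij, Finset.mem_univ i⟩)
  have hyz : ∀ i j, i ≠ f j → y i j = 0 := by
    intro i j hij
    have := hy1 i j
    rw [hxz i j hij] at this
    exact le_antisymm this (hy0 i j)
  set S : I → ℝ := fun i => ∑ l, ω l * x i l with hS
  have hSnn : ∀ i, 0 ≤ S i :=
    fun i => Finset.sum_nonneg fun l _ => mul_nonneg (hω l).le (hxnn i l)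
  have hSpos : ∀ j, 0 < S (f j) := by
    intro j
    apply Finset.sum_pos' (fun l _ => mul_nonneg (hω l).le (hxnn _ l))
    exact ⟨j, Finset.mem_univ j, by rw [hfx j]; simpa using hω j⟩
  have hystarz : ∀ i j, i ≠ f j → ystar i j = 0 := by
    intro i j hij
    rw [hystar i j, hxz i j hij]
    split_ifs <;> simp
  -- collapse the inner sums
  have hA : ∀ j, (∑ i, y i j * r i j) = y (f j) j * r (f j) j := by
    intro j
    apply Finset.sum_eq_single
    · intro i _ hij; rw [hyz i j hij, zero_mul]
    · intro h; exact absurd (Finset.mem_univ _) h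
  have hBval : ∀ j, ystar (f j) j = ω j * d (f j) / S (f j) := by
    intro j
    rw [hystar (f j) j, if_pos (hSpos j), hfx j, mul_one]
  have hB : ∀ j, (∑ i, ystar i j * r i j) = (ω j * d (f j) / S (f j)) * r (f j) j := by
    intro j
    rw [← hBval j]
    apply Finset.sum_eq_single
    · intro i _ hij; rw [hystarz i j hij, zero_mul]
    · intro h; exact absurd (Finset.mem_univ _) h
  have hdf : ∀ j, 0 < d (f j) := fun j => hdpos (f j) ⟨j, hfx j⟩
  have hApos : ∀ j, 0 < y (f j) j * r (f j) j :=
    fun j => mul_pos (hypos _ _ (hfx j)) (hr _ _)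
  have hBpos : ∀ j, 0 < (ω j * d (f j) / S (f j)) * r (f j) j :=
    fun j => mul_pos (div_pos (mul_pos (hω j) (hdf j)) (hSpos j)) (hr _ _)
  -- key pointwise bound: ω j (log A - log B) ≤ ω j A/B - ω j
  have key : ∀ j, ω j * Real.log (∑ i, y i j * r i j)
      - ω j * Real.log (∑ i, ystar i j * r i j) ≤ y (f j) j * S (f j) / d (f j) - ω j := by
    intro j
    rw [hA j, hB j, ← mul_sub, ← Real.log_div (hApos j).ne' (hBpos j).ne']
    have hq : 0 < y (f j) j * r (f j) j / ((ω j * d (f j) / S (f j)) * r (f j) j) :=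
      div_pos (hApos j) (hBpos j)
    have hlog := Real.log_le_sub_one_of_pos hq
    have hω' : ω j ≠ 0 := (hω j).ne'
    have hd' : d (f j) ≠ 0 := (hdf j).ne'
    have hS' : S (f j) ≠ 0 := (hSpos j).ne'
    have hr' : r (f j) j ≠ 0 := (hr (f j) j).ne'
    have hqe : y (f j) j * r (f j) j / ((ω j * d (f j) / S (f j)) * r (f j) j)
        = y (f j) j * S (f j) / (ω j * d (f j)) := by
      field_simp
    rw [hqe] at hlog
    have := mul_le_mul_of_nonneg_left hlog (hω j).le
    calc ω j * Real.log (y (f j) j * r (f j) j / ((ω j * d (f j) / S (f j)) * r (f j) j))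
        = ω j * Real.log (y (f j) j * S (f j) / (ω j * d (f j))) := by rw [hqe]
      _ ≤ ω j * (y (f j) j * S (f j) / (ω j * d (f j)) - 1) := this
      _ = y (f j) j * S (f j) / d (f j) - ω j := by
          rw [mul_sub, mul_one]
          congr 1
          field_simp
  -- sum the slack terms: ∑ j, y (f j) j * S (f j) / d (f j) = ∑ j, ω j
  have hslack : ∑ j, y (f j) j * S (f j) / d (f j) = ∑ j, ω j := by
    have h1 : ∀ j, y (f j) j * S (f j) / d (f j) = ∑ i, y i j * (S i / d i) := by
      intro j
      rw [eq_comm]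
      rw [Finset.sum_eq_single (f j)]
      · rw [mul_div_assoc]
      · intro i _ hij; rw [hyz i j hij, zero_mul]
      · intro h; exact absurd (Finset.mem_univ _) h
    simp_rw [h1]
    rw [Finset.sum_comm]
    have h2 : ∀ i, ∑ j, y i j * (S i / d i) = S i := by
      intro i
      rw [← Finset.sum_mul, hyd i]
      by_cases hdi : d i = 0
      · have hSz : S i = 0 := by
          apply Finset.sum_eq_zero
          intro l _
          rcases hx01 i l with h | h
          · simp [h]
          · exact absurd (hdpos i ⟨l, h⟩) (by simp [hdi])
        simp [hdi, hSz]
      · rw [div_eq_inv_mul, ← mul_assoc, mul_inv_cancel₀ hdi, one_mul]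
    simp_rw [h2, hS]
    rw [Finset.sum_comm]
    congr 1
    ext j
    rw [← Finset.mul_sum, hxc j, mul_one]
  -- conclude
  have := Finset.sum_le_sum fun j (_ : j ∈ Finset.univ) => key j
  rw [Finset.sum_sub_distrib] at this
  rw [Finset.sum_sub_distrib, hslack, sub_self] at this
  linarith
end

section
/- The function u ↦ ln(ln(1 + e^u)) is concave on ℝ. -/
/-!
Writing `L u = log (1 + exp u) > 0`, the derivative of `log ∘ L` is `exp u / ((1 + exp u) L u)`
and its second derivative is `exp u (L u - exp u) / ((1 + exp u) L u)²`, which is nonpositive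
because `log (1 + x) ≤ x`.
-/

open Real

lemma log_one_add_exp_pos (u : ℝ) : 0 < log (1 + exp u) :=
  log_pos (lt_add_of_pos_right 1 (exp_pos u))

lemma log_one_add_exp_le_exp (u : ℝ) : log (1 + exp u) ≤ exp u := by
  linarith [log_le_sub_one_of_pos (by positivity : 0 < 1 + exp u)]

lemma hasDerivAt_log_one_add_exp (u : ℝ) :
    HasDerivAt (fun u => log (1 + exp u)) (exp u / (1 + exp u)) u :=
  ((hasDerivAt_exp u).const_add 1).log (by positivity)

lemma hasDerivAt_log_log_one_add_exp (u : ℝ) :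
    HasDerivAt (fun u => log (log (1 + exp u)))
      (exp u / ((1 + exp u) * log (1 + exp u))) u := by
  simpa only [div_div] using
    (hasDerivAt_log_one_add_exp u).log (log_one_add_exp_pos u).ne'

lemma hasDerivAt_one_add_exp_mul_log_one_add_exp (u : ℝ) :
    HasDerivAt (fun u => (1 + exp u) * log (1 + exp u))
      (exp u * log (1 + exp u) + exp u) u := by
  have h := ((hasDerivAt_exp u).const_add 1).mul (hasDerivAt_log_one_add_exp u)
  rwa [mul_div_cancel₀ _ (by positivity : 1 + exp u ≠ 0)] at h

lemma hasDerivAt_deriv_log_log_one_add_exp (u : ℝ) :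
    HasDerivAt (fun u => exp u / ((1 + exp u) * log (1 + exp u)))
      (exp u * (log (1 + exp u) - exp u) / ((1 + exp u) * log (1 + exp u)) ^ 2) u := by
  refine ((hasDerivAt_exp u).div (hasDerivAt_one_add_exp_mul_log_one_add_exp u)
    (mul_pos (by positivity) (log_one_add_exp_pos u)).ne').congr_deriv ?_
  ring

/-- Section III-C: u ↦ ln(ln(1 + e^u)) is concave on ℝ. -/
theorem concave_log_log_one_add_exp :
    ConcaveOn ℝ Set.univ (fun u : ℝ => Real.log (Real.log (1 + Real.exp u))) := by
  have hderiv : deriv (fun u => log (log (1 + exp u))) =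
      fun u => exp u / ((1 + exp u) * log (1 + exp u)) :=
    funext fun u => (hasDerivAt_log_log_one_add_exp u).deriv
  apply concaveOn_univ_of_deriv2_nonpos
  · exact fun u => (hasDerivAt_log_log_one_add_exp u).differentiableAt
  · rw [hderiv]
    exact fun u => (hasDerivAt_deriv_log_log_one_add_exp u).differentiableAt
  · intro u
    rw [Function.iterate_succ_apply, Function.iterate_one, hderiv,
      (hasDerivAt_deriv_log_log_one_add_exp u).deriv]
    exact div_nonpos_of_nonpos_of_nonneg
      (mul_nonpos_of_nonneg_of_nonpos (exp_pos u).le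
        (sub_nonpos.mpr (log_one_add_exp_le_exp u)))
      (sq_nonneg _)
end

section
/- The function f(x) = e^x / ((1 + e^x)·ln(1 + e^x)) is strictly decreasing on ℝ. -/
/-!
Writing `y = eˣ`, the function is the reciprocal of `(1 + y) log (1 + y) / y`, the slope of the
chord of the strictly convex function `s ↦ s log s` between `s = 1` and `s = 1 + y`. Chord slopes
of a strictly convex function grow with the moving endpoint, and `x ↦ eˣ` is strictly increasing.
-/

open Real Set

lemma strictMonoOn_one_add_mul_log_one_add_div :
    StrictMonoOn (fun y : ℝ => (1 + y) * log (1 + y) / y) (Ioi 0) := by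
  intro y (hy : 0 < y) z (hz : 0 < z) hyz
  have hslope := strictConvexOn_mul_log.secant_strict_mono (a := 1) (x := 1 + y) (y := 1 + z)
    (by norm_num) (by simp only [mem_Ici]; linarith) (by simp only [mem_Ici]; linarith)
    (by linarith) (by linarith) (by linarith)
  simpa using hslope

lemma one_add_mul_log_one_add_div_pos {y : ℝ} (hy : 0 < y) : 0 < (1 + y) * log (1 + y) / y := by
  have : 0 < log (1 + y) := log_pos (by linarith)
  positivity

/-- Appendix C: f(x) = e^x / ((1 + e^x)·ln(1 + e^x)) is strictly decreasing on ℝ. -/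
theorem strictAnti_exp_div_one_add_exp_log :
    StrictAnti (fun x : ℝ =>
      Real.exp x / ((1 + Real.exp x) * Real.log (1 + Real.exp x))) := by
  intro a b hab
  simp only [← inv_div (_ * _)]
  exact inv_strictAnti₀ (one_add_mul_log_one_add_div_pos (exp_pos a))
    (strictMonoOn_one_add_mul_log_one_add_div (exp_pos a) (exp_pos b) (exp_lt_exp.mpr hab))
end

section
/- Let ω > 0, ψ > 0, φ > 0, g > 0 and c > 0 be real constants. Define a(y) = ω·g/(c·y·φ) − ψ·g/(c·φ) for 0 < y < ω/ψ (so that a(y) > 0 on this interval), and define h(y) = 1 − ψ·y/ω − f̄(a(y)). Then h is strictly decreasing on (0, ω/ψ); in particular, h has at most one zero in (0, ω/ψ). -/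
/-!
Writing `F(x) = (1 + x) log (1 + x) / x`, we have `f̄ = F⁻¹`, and `F(x)` is the slope of the
strictly convex function `t ↦ t log t` between `1` and `1 + x`; so `F` is strictly increasing and
`f̄` strictly decreasing on `(0, ∞)`. Since `a` is strictly decreasing and positive on `(0, ω/ψ)`,
`f̄ ∘ a` is strictly increasing there, and `h` is a strictly decreasing linear function minus it.
-/

open Real Set

theorem strictMonoOn_mul_log_div_sub_one :
    StrictMonoOn (fun y : ℝ => y * log y / (y - 1)) (Ioi 1) := by
  intro x (hx : 1 < x) y (hy : 1 < y) hxy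
  have hsecant := strictConvexOn_mul_log.secant_strict_mono (mem_Ici.2 zero_le_one)
    (mem_Ici.2 (zero_le_one.trans hx.le)) (mem_Ici.2 (zero_le_one.trans hy.le)) hx.ne' hy.ne' hxy
  simpa only [log_one, mul_zero, sub_zero] using hsecant

theorem strictAntiOn_div_one_add_mul_log_one_add :
    StrictAntiOn (fun x : ℝ => x / ((1 + x) * log (1 + x))) (Ioi 0) := by
  have hshift : MapsTo (fun x : ℝ => 1 + x) (Ioi 0) (Ioi 1) := fun x (hx : 0 < x) =>
    show 1 < 1 + x by linarith
  have hF : StrictMonoOn (fun x : ℝ => (1 + x) * log (1 + x) / (1 + x - 1)) (Ioi 0) :=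
    strictMonoOn_mul_log_div_sub_one.comp ((strictMono_id.const_add 1).strictMonoOn _) hshift
  have hF_pos : MapsTo (fun x : ℝ => (1 + x) * log (1 + x) / (1 + x - 1)) (Ioi 0) {r | 0 < r} :=
    fun x hx => by
      have hlog : 0 < log (1 + x) := log_pos (hshift hx)
      simp only [mem_Ioi, mem_ofPred_eq, add_sub_cancel_left] at hx ⊢
      positivity
  simpa only [Function.comp_def, inv_div, add_sub_cancel_left] using
    strictAntiOn_inv_pos.comp_strictMonoOn hF hF_pos

section KKTArgument

variable {ω ψ φ g c : ℝ}

theorem kkt_argument_pos (hψ : 0 < ψ) (hφ : 0 < φ) (hg : 0 < g) (hc : 0 < c) {y : ℝ}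
    (hy : y ∈ Ioo 0 (ω / ψ)) : 0 < ω * g / (c * y * φ) - ψ * g / (c * φ) := by
  obtain ⟨hy₀, hyω⟩ := hy
  have hψy : ψ < ω / y := (lt_div_iff₀ hy₀).2 (by rwa [mul_comm, ← lt_div_iff₀ hψ])
  have hsplit : ω * g / (c * y * φ) - ψ * g / (c * φ) = (ω / y - ψ) * (g / (c * φ)) := by
    field_simp
  rw [hsplit]
  exact mul_pos (sub_pos.2 hψy) (by positivity)

theorem kkt_argument_strictAntiOn (hω : 0 < ω) (hφ : 0 < φ) (hg : 0 < g) (hc : 0 < c) :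
    StrictAntiOn (fun y => ω * g / (c * y * φ) - ψ * g / (c * φ)) (Ioi 0) := by
  intro y₁ (hy₁ : 0 < y₁) y₂ _ hlt
  simp only [sub_lt_sub_iff_right]
  exact div_lt_div_of_pos_left (by positivity) (by positivity) (by gcongr)

end KKTArgument

/-- Appendix E: the KKT function h(y) = 1 − ψy/ω − f̄(a(y)), with
a(y) = ωg/(cyφ) − ψg/(cφ) and f̄(x) = x/((1+x)·ln(1+x)), is strictly decreasing
on (0, ω/ψ); in particular it has at most one zero there. -/
theorem kkt_function_strictAnti_and_unique_zero
    (ω ψ φ g c : ℝ) (hω : 0 < ω) (hψ : 0 < ψ) (hφ : 0 < φ) (hg : 0 < g)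
    (hc : 0 < c)
    (a : ℝ → ℝ) (ha : ∀ y, a y = ω * g / (c * y * φ) - ψ * g / (c * φ))
    (h : ℝ → ℝ)
    (hh : ∀ y, h y = 1 - ψ * y / ω - a y / ((1 + a y) * Real.log (1 + a y))) :
    (∀ y ∈ Set.Ioo (0 : ℝ) (ω / ψ), 0 < a y) ∧
    StrictAntiOn h (Set.Ioo 0 (ω / ψ)) ∧
    (∀ y₁ ∈ Set.Ioo (0 : ℝ) (ω / ψ), ∀ y₂ ∈ Set.Ioo (0 : ℝ) (ω / ψ),
      h y₁ = 0 → h y₂ = 0 → y₁ = y₂) := by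
  have ha_pos : ∀ y ∈ Ioo (0 : ℝ) (ω / ψ), 0 < a y :=
    fun y hy => ha y ▸ kkt_argument_pos hψ hφ hg hc hy
  have ha_anti : StrictAntiOn a (Ioo 0 (ω / ψ)) := funext ha ▸
    (kkt_argument_strictAntiOn hω hφ hg hc).mono Ioo_subset_Ioi_self
  have hfbar_a : StrictMonoOn (fun y => a y / ((1 + a y) * log (1 + a y))) (Ioo 0 (ω / ψ)) :=
    strictAntiOn_div_one_add_mul_log_one_add.comp ha_anti ha_pos
  have hanti : StrictAntiOn h (Ioo 0 (ω / ψ)) := by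
    intro y₁ hy₁ y₂ hy₂ hlt
    have hlin : ψ * y₁ / ω < ψ * y₂ / ω := by gcongr
    have hfbar := hfbar_a hy₁ hy₂ hlt
    rw [hh, hh]
    linarith
  exact ⟨ha_pos, hanti, fun y₁ hy₁ y₂ hy₂ hz₁ hz₂ => hanti.injOn hy₁ hy₂ (hz₁.trans hz₂.symm)⟩
end
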